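/- arXiv:2506.01143 — 4 statements merged into one kernel-verified Lean document; each statement's English description precedes it below -/
import Mathlib

section
/- Assume A ∈ ℝ^{N×d} and y ∈ ℝ^N satisfy the standing assumption (unique case). Then: (1) both S and S^c are nonempty, and for every n ∈ ker(A) with n ≠ 0 the restriction n_{S^c} is nonzero (so the null space constants ρ, ρ⁻, ρ̃ are well-defined); (2) 0 ≤ ρ < 1, 0 ≤ ρ⁻ < ∞, 0 ≤ ρ̃ < ∞, and the three suprema defining ρ, ρ⁻ and ρ̃ are attained by some n ∈ ker(A)\{0}. -/
/-!
If `g` is the unique `ℓ¹`-minimizer and `0 ≠ n ∈ ker A`, then for small `t` the signs of `g + t n`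
on `S` are those of `g`, so `‖g + t n‖₁ = ‖g‖₁ + t ∑_S sign(gᵢ) nᵢ + |t| ‖n_{Sᶜ}‖₁`. Strict
minimality at `t = ±ε` gives `|∑_S sign(gᵢ) nᵢ| < ‖n_{Sᶜ}‖₁`: the denominators of the three
quotients are positive, and `ρ < 1` once `ρ` is attained. The quotients are invariant under
positive scaling of `n`, so each set of quotients is the continuous image of the compact set
`ker A ∩ {‖n‖ = 1}`; hence it is compact and contains its supremum.
-/

open scoped BigOperators

noncomputable section

/-- The ℓ¹-norm of a vector in ℝ^d. -/
def l1 {d : ℕ} (x : Fin d → ℝ) : ℝ := ∑ i, |x i|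

/-- The support of a vector, as a finset of indices. -/
def suppF {d : ℕ} (g : Fin d → ℝ) : Finset (Fin d) :=
  Finset.univ.filter (fun i => g i ≠ 0)

/-- The set of quotients whose supremum defines the null space constant ρ. -/
def rhoSet {N d : ℕ} (A : Matrix (Fin N) (Fin d) ℝ) (g : Fin d → ℝ) : Set ℝ :=
  { r | ∃ n : Fin d → ℝ, A.mulVec n = 0 ∧ n ≠ 0 ∧
      r = (-∑ i ∈ suppF g, Real.sign (g i) * n i) / ∑ i ∈ (suppF g)ᶜ, |n i| }

/-- The null space constant ρ. -/
def rho {N d : ℕ} (A : Matrix (Fin N) (Fin d) ℝ) (g : Fin d → ℝ) : ℝ :=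
  sSup (rhoSet A g)

/-- The set of quotients whose supremum defines the null space constant ρ⁻. -/
def rhoMinusSet {N d : ℕ} (A : Matrix (Fin N) (Fin d) ℝ) (g : Fin d → ℝ) : Set ℝ :=
  { r | ∃ n : Fin d → ℝ, A.mulVec n = 0 ∧ n ≠ 0 ∧
      r = (∑ i ∈ (suppF g).filter (fun i => Real.sign (g i) * n i < 0), |n i|) /
          ∑ i ∈ (suppF g)ᶜ, |n i| }

/-- The null space constant ρ⁻. -/
def rhoMinus {N d : ℕ} (A : Matrix (Fin N) (Fin d) ℝ) (g : Fin d → ℝ) : ℝ :=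
  sSup (rhoMinusSet A g)

/-- The set of quotients whose supremum defines the null space constant ρ̃. -/
def rhoTildeSet {N d : ℕ} (A : Matrix (Fin N) (Fin d) ℝ) (g : Fin d → ℝ) : Set ℝ :=
  { r | ∃ n : Fin d → ℝ, A.mulVec n = 0 ∧ n ≠ 0 ∧
      r = (∑ i ∈ suppF g, |n i|) / ∑ i ∈ (suppF g)ᶜ, |n i| }

/-- The null space constant ρ̃. -/
def rhoTilde {N d : ℕ} (A : Matrix (Fin N) (Fin d) ℝ) (g : Fin d → ℝ) : ℝ :=
  sSup (rhoTildeSet A g)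

/-- min_{i ∈ S} |g i|, where S = supp g. -/
def minS {d : ℕ} (g : Fin d → ℝ) : ℝ := sInf { r | ∃ i ∈ suppF g, r = |g i| }

/-- max_{i ∈ S} |g i|, where S = supp g. -/
def maxS {d : ℕ} (g : Fin d → ℝ) : ℝ := sSup { r | ∃ i ∈ suppF g, r = |g i| }

/-- The condition number κ* of g. -/
def kappa {d : ℕ} (g : Fin d → ℝ) : ℝ := maxS g / minS g

/-- The ℓ∞-norm of the restriction of a vector to a set T of indices. -/
def linftyOn {d : ℕ} (T : Finset (Fin d)) (v : Fin d → ℝ) : ℝ :=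
  sSup { r | ∃ i ∈ T, r = |v i| }

/-- The ℓ∞-norm of a vector. -/
def linfty {d : ℕ} (v : Fin d → ℝ) : ℝ := sSup { r | ∃ i : Fin d, r = |v i| }

open Filter Topology

lemma abs_add_eq_abs_add_sign_mul {a b : ℝ} (h : |b| ≤ |a|) :
    |a + b| = |a| + Real.sign a * b := by
  obtain ⟨hlo, hhi⟩ := abs_le.mp h
  rcases lt_trichotomy a 0 with ha | rfl | ha
  · rw [Real.sign_of_neg ha, abs_of_neg ha] at *
    rw [abs_of_nonpos (by linarith)]
    ring
  · simp [le_antisymm (by simpa using hhi) (by simpa using hlo)]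
  · rw [Real.sign_of_pos ha, abs_of_pos ha] at *
    rw [abs_of_nonneg (by linarith)]
    ring

lemma abs_sign_of_ne_zero {r : ℝ} (hr : r ≠ 0) : |Real.sign r| = 1 := by
  rcases Real.sign_apply_eq_of_ne_zero r hr with h | h <;> simp [h]

lemma isCompact_image_diff_zero_of_smul_invariant {E β : Type*} [NormedAddCommGroup E]
    [NormedSpace ℝ E] [FiniteDimensional ℝ E] [TopologicalSpace β] (K : Submodule ℝ E)
    {q : E → β} (hq : ContinuousOn q ((K : Set E) \ {0}))
    (hinv : ∀ c : ℝ, 0 < c → ∀ x, q (c • x) = q x) :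
    IsCompact (q '' ((K : Set E) \ {0})) := by
  have hsphere : (K : Set E) ∩ Metric.sphere 0 1 ⊆ (K : Set E) \ {0} :=
    fun x ⟨hxK, hx1⟩ => ⟨hxK, by rintro rfl; simp at hx1⟩
  have himage : q '' ((K : Set E) \ {0}) = q '' ((K : Set E) ∩ Metric.sphere 0 1) := by
    refine subset_antisymm ?_ (Set.image_mono hsphere)
    rintro _ ⟨x, ⟨hxK, hx0⟩, rfl⟩
    have hx : 0 < ‖x‖ := norm_pos_iff.mpr hx0
    exact ⟨‖x‖⁻¹ • x, ⟨K.smul_mem _ hxK, by simp [norm_smul, hx.ne']⟩, hinv _ (inv_pos.mpr hx) x⟩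
  rw [himage]
  exact ((isCompact_sphere 0 1).inter_left K.closed_of_finiteDimensional).image_of_continuousOn
    (hq.mono hsphere)

section

variable {N d : ℕ}

lemma mem_suppF {g : Fin d → ℝ} {i : Fin d} : i ∈ suppF g ↔ g i ≠ 0 := by
  simp [suppF]

lemma mem_compl_suppF {g : Fin d → ℝ} {i : Fin d} : i ∈ (suppF g)ᶜ ↔ g i = 0 := by
  simp [suppF]

lemma suppF_nonempty {g : Fin d → ℝ} (hg : g ≠ 0) : (suppF g).Nonempty := by
  obtain ⟨i, hi⟩ := Function.ne_iff.mp hg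
  exact ⟨i, mem_suppF.mpr hi⟩

lemma l1_eq_sum_suppF (g : Fin d → ℝ) : l1 g = ∑ i ∈ suppF g, |g i| :=
  (Finset.sum_subset (Finset.subset_univ _) fun i _ hi => by
    rw [mem_compl_suppF.mp (Finset.mem_compl.mpr hi), abs_zero]).symm

lemma l1_add_of_abs_le {g m : Fin d → ℝ} (h : ∀ i ∈ suppF g, |m i| ≤ |g i|) :
    l1 (g + m) = l1 g + ∑ i ∈ suppF g, Real.sign (g i) * m i + ∑ i ∈ (suppF g)ᶜ, |m i| := by
  have on_supp : ∑ i ∈ suppF g, |g i + m i| = ∑ i ∈ suppF g, (|g i| + Real.sign (g i) * m i) :=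
    Finset.sum_congr rfl fun i hi => abs_add_eq_abs_add_sign_mul (h i hi)
  have off_supp : ∑ i ∈ (suppF g)ᶜ, |g i + m i| = ∑ i ∈ (suppF g)ᶜ, |m i| :=
    Finset.sum_congr rfl fun i hi => by rw [mem_compl_suppF.mp hi, zero_add]
  rw [l1, ← Finset.sum_add_sum_compl (suppF g)]
  simp only [Pi.add_apply]
  rw [on_supp, off_supp, Finset.sum_add_distrib, l1_eq_sum_suppF]

lemma exists_pos_forall_abs_mul_le (g n : Fin d → ℝ) :
    ∃ t > 0, ∀ i ∈ suppF g, |t * n i| ≤ |g i| := by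
  have small : ∀ᶠ t in 𝓝 (0 : ℝ), ∀ i ∈ suppF g, |t * n i| ≤ |g i| := by
    refine (eventually_all_finset _).mpr fun i hi => ?_
    have hlim : Tendsto (fun t : ℝ => |t * n i|) (𝓝 0) (𝓝 0) := by
      simpa using ((continuous_id.mul continuous_const).abs.tendsto (0 : ℝ) :
        Tendsto (fun t : ℝ => |t * n i|) _ _)
    exact hlim.eventually (eventually_le_nhds (abs_pos.mpr (mem_suppF.mp hi)))
  obtain ⟨t, ht, hpos⟩ :=
    ((small.filter_mono nhdsWithin_le_nhds).and (self_mem_nhdsWithin (s := Set.Ioi 0))).exists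
  exact ⟨t, hpos, ht⟩

lemma abs_sum_sign_mul_lt_of_l1_lt_add_smul {g n : Fin d → ℝ}
    (hline : ∀ t : ℝ, t ≠ 0 → l1 g < l1 (g + t • n)) :
    |∑ i ∈ suppF g, Real.sign (g i) * n i| < ∑ i ∈ (suppF g)ᶜ, |n i| := by
  obtain ⟨t, ht, hsmall⟩ := exists_pos_forall_abs_mul_le g n
  have expand : ∀ s : ℝ, |s| = t → l1 (g + s • n) =
      l1 g + s * ∑ i ∈ suppF g, Real.sign (g i) * n i + t * ∑ i ∈ (suppF g)ᶜ, |n i| := by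
    intro s hs
    rw [l1_add_of_abs_le fun i hi => by simpa [abs_mul, hs, abs_of_pos ht] using hsmall i hi]
    simp only [Pi.smul_apply, smul_eq_mul, abs_mul, hs, Finset.mul_sum, mul_left_comm]
  have hplus := hline t ht.ne'
  have hminus := hline (-t) (neg_ne_zero.mpr ht.ne')
  rw [expand t (abs_of_pos ht)] at hplus
  rw [expand (-t) (by rw [abs_neg, abs_of_pos ht])] at hminus
  rw [abs_lt]
  constructor <;> nlinarith

lemma abs_sum_sign_mul_lt_of_unique_l1_min {A : Matrix (Fin N) (Fin d) ℝ} {y : Fin N → ℝ}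
    {g : Fin d → ℝ} (hgy : A.mulVec g = y) (hgmin : ∀ x, A.mulVec x = y → l1 g ≤ l1 x)
    (hguniq : ∀ x, A.mulVec x = y → l1 x = l1 g → x = g)
    {n : Fin d → ℝ} (hn : A.mulVec n = 0) (hn0 : n ≠ 0) :
    |∑ i ∈ suppF g, Real.sign (g i) * n i| < ∑ i ∈ (suppF g)ᶜ, |n i| := by
  refine abs_sum_sign_mul_lt_of_l1_lt_add_smul fun t ht => ?_
  have hx : A.mulVec (g + t • n) = y := by
    rw [Matrix.mulVec_add, Matrix.mulVec_smul, hn, smul_zero, add_zero, hgy]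
  have hne : g + t • n ≠ g := by simpa using smul_ne_zero ht hn0
  exact (hgmin _ hx).lt_of_ne fun h => hne (hguniq _ hx h.symm)

variable {A : Matrix (Fin N) (Fin d) ℝ} {g : Fin d → ℝ}

lemma isCompact_setOf_div_sum_abs_compl {f : (Fin d → ℝ) → ℝ} (hf : Continuous f)
    (hfhom : ∀ c : ℝ, 0 < c → ∀ n, f (c • n) = c * f n)
    (hden : ∀ n, A.mulVec n = 0 → n ≠ 0 → 0 < ∑ i ∈ (suppF g)ᶜ, |n i|) :
    IsCompact {r | ∃ n, A.mulVec n = 0 ∧ n ≠ 0 ∧ r = f n / ∑ i ∈ (suppF g)ᶜ, |n i|} := by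
  have hset : {r | ∃ n, A.mulVec n = 0 ∧ n ≠ 0 ∧ r = f n / ∑ i ∈ (suppF g)ᶜ, |n i|} =
      (fun n => f n / ∑ i ∈ (suppF g)ᶜ, |n i|) '' ((LinearMap.ker A.mulVecLin : Set _) \ {0}) := by
    ext r
    simp [eq_comm, and_assoc]
  rw [hset]
  refine isCompact_image_diff_zero_of_smul_invariant _ ?_ fun c hc n => ?_
  · exact hf.continuousOn.div (by fun_prop) fun n ⟨hn, hn0⟩ => (hden n hn hn0).ne'
  · simp only [hfhom c hc, Pi.smul_apply, smul_eq_mul, abs_mul, abs_of_pos hc, ← Finset.mul_sum]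
    exact mul_div_mul_left _ _ hc.ne'

lemma sum_filter_sign_mul_neg_eq_sum_max (g n : Fin d → ℝ) :
    ∑ i ∈ (suppF g).filter (fun i => Real.sign (g i) * n i < 0), |n i| =
      ∑ i ∈ suppF g, max (-(Real.sign (g i) * n i)) 0 := by
  rw [Finset.sum_filter]
  refine Finset.sum_congr rfl fun i hi => ?_
  split_ifs with h
  · rw [max_eq_left (by linarith), ← abs_of_neg h, abs_mul, abs_sign_of_ne_zero (mem_suppF.mp hi),
      one_mul]
  · exact (max_eq_right (by linarith)).symm

lemma isCompact_rhoSet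
    (hden : ∀ n, A.mulVec n = 0 → n ≠ 0 → 0 < ∑ i ∈ (suppF g)ᶜ, |n i|) :
    IsCompact (rhoSet A g) :=
  isCompact_setOf_div_sum_abs_compl (by fun_prop)
    (fun c hc n => by simp [Finset.mul_sum, mul_left_comm]) hden

lemma isCompact_rhoMinusSet
    (hden : ∀ n, A.mulVec n = 0 → n ≠ 0 → 0 < ∑ i ∈ (suppF g)ᶜ, |n i|) :
    IsCompact (rhoMinusSet A g) := by
  simp only [rhoMinusSet, sum_filter_sign_mul_neg_eq_sum_max]
  exact isCompact_setOf_div_sum_abs_compl (by fun_prop)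
    (fun c hc n => by simp [Finset.mul_sum, mul_left_comm, mul_max_of_nonneg _ _ hc.le]) hden

lemma isCompact_rhoTildeSet
    (hden : ∀ n, A.mulVec n = 0 → n ≠ 0 → 0 < ∑ i ∈ (suppF g)ᶜ, |n i|) :
    IsCompact (rhoTildeSet A g) :=
  isCompact_setOf_div_sum_abs_compl (by fun_prop)
    (fun c hc n => by simp [Finset.mul_sum, abs_mul, abs_of_pos hc]) hden

lemma neg_mem_rhoSet {r : ℝ} (hr : r ∈ rhoSet A g) : -r ∈ rhoSet A g := by
  obtain ⟨n, hn, hn0, rfl⟩ := hr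
  refine ⟨-n, by rw [Matrix.mulVec_neg, hn, neg_zero], neg_ne_zero.mpr hn0, ?_⟩
  simp only [Pi.neg_apply, mul_neg, Finset.sum_neg_distrib, abs_neg, neg_div]

lemma rho_nonneg (hker : ∃ n : Fin d → ℝ, n ≠ 0 ∧ A.mulVec n = 0) : 0 ≤ rho A g := by
  obtain ⟨n, hn0, hn⟩ := hker
  obtain ⟨r, hr⟩ : (rhoSet A g).Nonempty := ⟨_, n, hn, hn0, rfl⟩
  rcases le_total 0 r with h | h
  · exact Real.sSup_nonneg' ⟨r, hr, h⟩
  · exact Real.sSup_nonneg' ⟨-r, neg_mem_rhoSet hr, neg_nonneg.mpr h⟩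

lemma rhoMinus_nonneg : 0 ≤ rhoMinus A g :=
  Real.sSup_nonneg fun _ ⟨_, _, _, hr⟩ => hr ▸ by positivity

lemma rhoTilde_nonneg : 0 ≤ rhoTilde A g :=
  Real.sSup_nonneg fun _ ⟨_, _, _, hr⟩ => hr ▸ by positivity

end

theorem nullspace_constants_wellposed_general {N d : ℕ}
    (A : Matrix (Fin N) (Fin d) ℝ) (y : Fin N → ℝ) (g : Fin d → ℝ)
    (hy : y ≠ 0)
    (hker : ∃ n : Fin d → ℝ, n ≠ 0 ∧ A.mulVec n = 0)
    (hgy : A.mulVec g = y)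
    (hgmin : ∀ x : Fin d → ℝ, A.mulVec x = y → l1 g ≤ l1 x)
    (hguniq : ∀ x : Fin d → ℝ, A.mulVec x = y → l1 x = l1 g → x = g) :
    ((suppF g).Nonempty ∧ ((suppF g)ᶜ : Finset (Fin d)).Nonempty ∧
      (∀ n : Fin d → ℝ, A.mulVec n = 0 → n ≠ 0 → ∃ i ∈ (suppF g)ᶜ, n i ≠ 0)) ∧
    (0 ≤ rho A g ∧ rho A g < 1 ∧
      0 ≤ rhoMinus A g ∧ BddAbove (rhoMinusSet A g) ∧
      0 ≤ rhoTilde A g ∧ BddAbove (rhoTildeSet A g) ∧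
      rho A g ∈ rhoSet A g ∧ rhoMinus A g ∈ rhoMinusSet A g ∧
      rhoTilde A g ∈ rhoTildeSet A g) := by
  have hnsp {n} (hn : A.mulVec n = 0) (hn0 : n ≠ 0) :=
    abs_sum_sign_mul_lt_of_unique_l1_min hgy hgmin hguniq hn hn0
  have hden n (hn : A.mulVec n = 0) (hn0 : n ≠ 0) : 0 < ∑ i ∈ (suppF g)ᶜ, |n i| :=
    (abs_nonneg _).trans_lt (hnsp hn hn0)
  have hoff n (hn : A.mulVec n = 0) (hn0 : n ≠ 0) : ∃ i ∈ (suppF g)ᶜ, n i ≠ 0 := by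
    obtain ⟨i, hi, hni⟩ := Finset.exists_ne_zero_of_sum_ne_zero (hden n hn hn0).ne'
    exact ⟨i, hi, abs_ne_zero.mp hni⟩
  obtain ⟨n₀, hn₀0, hn₀⟩ := hker
  have hρmem : rho A g ∈ rhoSet A g :=
    (isCompact_rhoSet hden).sSup_mem ⟨_, n₀, hn₀, hn₀0, rfl⟩
  have hρlt : rho A g < 1 := by
    obtain ⟨n, hn, hn0, hρn⟩ := hρmem
    rw [hρn, div_lt_one (hden n hn hn0)]
    exact (neg_le_abs _).trans_lt (hnsp hn hn0)
  obtain ⟨i, hi, -⟩ := hoff n₀ hn₀ hn₀0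
  exact ⟨⟨suppF_nonempty fun hg => hy (by simp [← hgy, hg]), ⟨i, hi⟩, hoff⟩,
    rho_nonneg ⟨n₀, hn₀0, hn₀⟩, hρlt, rhoMinus_nonneg, (isCompact_rhoMinusSet hden).bddAbove,
    rhoTilde_nonneg, (isCompact_rhoTildeSet hden).bddAbove, hρmem,
    (isCompact_rhoMinusSet hden).sSup_mem ⟨_, n₀, hn₀, hn₀0, rfl⟩,
    (isCompact_rhoTildeSet hden).sSup_mem ⟨_, n₀, hn₀, hn₀0, rfl⟩⟩

/-- well-posedness of the null space property constants (unique case). -/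
theorem nullspace_constants_wellposed {N d : ℕ}
    (A : Matrix (Fin N) (Fin d) ℝ) (y : Fin N → ℝ) (g : Fin d → ℝ)
    (hex : ∃ x : Fin d → ℝ, A.mulVec x = y)
    (hy : y ≠ 0)
    (hker : ∃ n : Fin d → ℝ, n ≠ 0 ∧ A.mulVec n = 0)
    (hgy : A.mulVec g = y)
    (hgmin : ∀ x : Fin d → ℝ, A.mulVec x = y → l1 g ≤ l1 x)
    (hguniq : ∀ x : Fin d → ℝ, A.mulVec x = y → l1 x = l1 g → x = g) :
    ((suppF g).Nonempty ∧ ((suppF g)ᶜ : Finset (Fin d)).Nonempty ∧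
      (∀ n : Fin d → ℝ, A.mulVec n = 0 → n ≠ 0 → ∃ i ∈ (suppF g)ᶜ, n i ≠ 0)) ∧
    (0 ≤ rho A g ∧ rho A g < 1 ∧
      0 ≤ rhoMinus A g ∧ BddAbove (rhoMinusSet A g) ∧
      0 ≤ rhoTilde A g ∧ BddAbove (rhoTildeSet A g) ∧
      rho A g ∈ rhoSet A g ∧ rhoMinus A g ∈ rhoMinusSet A g ∧
      rhoTilde A g ∈ rhoTildeSet A g) :=
  nullspace_constants_wellposed_general A y g hy hker hgy hgmin hguniq
end
end

section
/- Let d ≥ 3 and D ≥ 3 be integers and let ρ ∈ [0,1) be arbitrary. Then there exist N ∈ ℕ, a matrix A ∈ ℝ^{N×d} and y ∈ ℝ^N such that: (1) the problem min{‖x‖₁ : Ax = y} has a unique minimizer g* whose associated null space constant equals ρ (with associated constant ρ̃); and (2) denoting for each α > 0 by x^∞(α) the unique minimizer of D_{Q^D_α}(x,0) over {x : Ax = y}, one has lim_{α↓0} ‖x^∞(α) − g*‖₁ / (α·|S^c|·(1+ρ̃)) = h_D(ρ) and lim_{α↓0} ‖x^∞(α)_{S^c} − g*_{S^c}‖_∞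 / α = h_D(ρ). -/
open scoped BigOperators

noncomputable section

/-- The function h_D(z) = (1-z)^{-D/(D-2)} - (1+z)^{-D/(D-2)}; on (-1,1) it is a strictly
increasing bijection onto ℝ. -/
def hDfun (D : ℕ) (z : ℝ) : ℝ :=
  (1 - z) ^ (-(D : ℝ) / ((D : ℝ) - 2)) - (1 + z) ^ (-(D : ℝ) / ((D : ℝ) - 2))

/-- The inverse h_D^{-1} : ℝ → (-1,1) of h_D restricted to (-1,1). -/
def hDInv (D : ℕ) (u : ℝ) : ℝ :=
  haveI : Nonempty (Set.Ioo (-1 : ℝ) 1) := ⟨⟨0, by norm_num [Set.mem_Ioo]⟩⟩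
  (Function.invFun (fun z : Set.Ioo (-1 : ℝ) 1 => hDfun D z.1) u).1

/-- q_D(u) = ∫₀ᵘ h_D^{-1}(v) dv. -/
def qDfun (D : ℕ) (u : ℝ) : ℝ := ∫ v in (0:ℝ)..u, hDInv D v

/-- The deep potential Q^D_α. -/
def Qpot {d : ℕ} (D : ℕ) (α : ℝ) (z : Fin d → ℝ) : ℝ :=
  ∑ i, α * qDfun D (z i / α)

/-- The Bregman divergence of the deep potential Q^D_α; its gradient at q has entries
`h_D^{-1}(q i / α)`. -/
def DQ {d : ℕ} (D : ℕ) (α : ℝ) (p q : Fin d → ℝ) : ℝ :=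
  Qpot D α p - Qpot D α q - ∑ i, hDInv D (q i / α) * (p i - q i)

/-
The extremal instance is `g* = e₀` with `ker A` spanned by `n = (-ρ m, 1, …, 1)`, `m = d - 1`:
both null space constants equal `ρ`, and `‖g* + t n‖₁ ≥ 1 + (1 - ρ) m |t|` makes `g*` the unique
ℓ¹ minimizer. The feasible set is the line `g* + t n`, along which `Q^D_α` has derivative
`m (h_D⁻¹(t/α) - ρ h_D⁻¹((1 - ρ m t)/α))`, strictly increasing in `t`, so `x^∞(α) = g* + T(α) n`
for its unique zero `T(α)`. As `T(α) ≤ α h_D(ρ)`, the argument `(1 - ρ m T(α))/α` tends to `∞`,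
so `T(α)/α = h_D(ρ h_D⁻¹(…)) → h_D(ρ)`; both quotients of the theorem equal `|T(α)|/α`.
-/
open Set Filter Topology

section HD

variable {D : ℕ}

lemma hD_exponent_le_neg_one (hD : 3 ≤ D) : -(D : ℝ) / ((D : ℝ) - 2) ≤ -1 := by
  have : (3 : ℝ) ≤ D := by exact_mod_cast hD
  rw [div_le_iff₀ (by linarith)]
  linarith

lemma hD_exponent_neg (hD : 3 ≤ D) : -(D : ℝ) / ((D : ℝ) - 2) < 0 :=
  (hD_exponent_le_neg_one hD).trans_lt (by norm_num)

lemma hDfun_neg (z : ℝ) : hDfun D (-z) = -hDfun D z := by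
  simp only [hDfun, sub_neg_eq_add, neg_sub, ← sub_eq_add_neg]

lemma hDfun_zero : hDfun D 0 = 0 := by
  simp [hDfun]

lemma hDfun_strictMonoOn (hD : 3 ≤ D) : StrictMonoOn (hDfun D) (Ioo (-1) 1) := by
  rintro z₁ ⟨h₁, -⟩ z₂ ⟨-, h₂⟩ hz
  have := hD_exponent_neg hD
  have h₁ := Real.rpow_lt_rpow_of_neg (by linarith) (by linarith : 1 - z₂ < 1 - z₁) this
  have h₂ := Real.rpow_lt_rpow_of_neg (by linarith) (by linarith : 1 + z₁ < 1 + z₂) this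
  unfold hDfun
  linarith

lemma hDfun_continuousOn : ContinuousOn (hDfun D) (Ioo (-1) 1) := by
  refine ContinuousOn.sub (.rpow_const (by fun_prop) ?_) (.rpow_const (by fun_prop) ?_) <;>
    rintro z ⟨h₁, h₂⟩ <;> left <;> linarith

lemma abs_lt_hDfun_one_sub (hD : 3 ≤ D) (u : ℝ) : |u| < hDfun D (1 - (|u| + 2)⁻¹) := by
  set δ := (|u| + 2)⁻¹
  have hδ₀ : 0 < δ := by positivity
  have hδ₁ : δ ≤ 1 := inv_le_one_of_one_le₀ (by linarith [abs_nonneg u])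
  have hbig : |u| + 2 ≤ δ ^ (-(D : ℝ) / ((D : ℝ) - 2)) := by
    calc |u| + 2 = δ ^ (-1 : ℝ) := by rw [Real.rpow_neg_one, inv_inv]
      _ ≤ _ := Real.rpow_le_rpow_of_exponent_ge hδ₀ hδ₁ (hD_exponent_le_neg_one hD)
  have hsmall : (1 + (1 - δ)) ^ (-(D : ℝ) / ((D : ℝ) - 2)) ≤ 1 :=
    Real.rpow_le_one_of_one_le_of_nonpos (by linarith) (hD_exponent_neg hD).le
  rw [hDfun, sub_sub_cancel]
  linarith

lemma exists_hDfun_eq (hD : 3 ≤ D) (u : ℝ) : ∃ z ∈ Ioo (-1 : ℝ) 1, hDfun D z = u := by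
  set b := 1 - (|u| + 2)⁻¹
  have hb : b < 1 := sub_lt_self 1 (by positivity)
  have hb₀ : 0 < b := sub_pos.2 (inv_lt_one_of_one_lt₀ (by linarith [abs_nonneg u]))
  have hu := abs_lt_hDfun_one_sub hD u
  have hsub : Icc (-b) b ⊆ Ioo (-1) 1 := fun z hz => ⟨by linarith [hz.1], by linarith [hz.2]⟩
  have hbu : u ∈ Icc (hDfun D (-b)) (hDfun D b) := by
    rw [hDfun_neg]
    constructor <;> linarith [abs_le.1 hu.le, neg_abs_le u, le_abs_self u]
  obtain ⟨z, hz, rfl⟩ := intermediate_value_Icc (by linarith)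
    (hDfun_continuousOn.mono hsub) hbu
  exact ⟨z, hsub hz, rfl⟩

lemma hDfun_nonneg (hD : 3 ≤ D) {z : ℝ} (h₀ : 0 ≤ z) (h₁ : z < 1) : 0 ≤ hDfun D z := by
  rw [← hDfun_zero (D := D)]
  exact (hDfun_strictMonoOn hD).monotoneOn ⟨by norm_num, by norm_num⟩ ⟨by linarith, h₁⟩ h₀

lemma hDInv_mem (u : ℝ) : hDInv D u ∈ Ioo (-1 : ℝ) 1 :=
  Subtype.prop _

lemma hDfun_hDInv (hD : 3 ≤ D) (u : ℝ) : hDfun D (hDInv D u) = u := by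
  have : Nonempty (Ioo (-1 : ℝ) 1) := ⟨⟨0, by norm_num, by norm_num⟩⟩
  obtain ⟨z, hz, hzu⟩ := exists_hDfun_eq hD u
  exact Function.invFun_eq (f := fun z : Ioo (-1 : ℝ) 1 => hDfun D z) ⟨⟨z, hz⟩, hzu⟩

lemma hDInv_hDfun (hD : 3 ≤ D) {z : ℝ} (hz : z ∈ Ioo (-1 : ℝ) 1) : hDInv D (hDfun D z) = z :=
  (hDfun_strictMonoOn hD).injOn (hDInv_mem _) hz (hDfun_hDInv hD _)

lemma hDInv_zero (hD : 3 ≤ D) : hDInv D 0 = 0 := by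
  simpa [hDfun_zero] using hDInv_hDfun (D := D) hD (z := 0) ⟨by norm_num, by norm_num⟩

lemma hDInv_strictMono (hD : 3 ≤ D) : StrictMono (hDInv D) := fun u v huv => by
  rw [← (hDfun_strictMonoOn hD).lt_iff_lt (hDInv_mem u) (hDInv_mem v),
    hDfun_hDInv hD, hDfun_hDInv hD]
  exact huv

lemma range_hDInv (hD : 3 ≤ D) : range (hDInv D) = Ioo (-1) 1 :=
  (range_subset_iff.2 hDInv_mem).antisymm fun z hz => ⟨hDfun D z, hDInv_hDfun hD hz⟩

lemma hDInv_continuous (hD : 3 ≤ D) : Continuous (hDInv D) :=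
  continuous_iff_continuousAt.2 fun u =>
    continuousAt_of_monotoneOn_of_image_mem_nhds ((hDInv_strictMono hD).monotone.monotoneOn univ)
      univ_mem (by rw [image_univ, range_hDInv hD]; exact isOpen_Ioo.mem_nhds (hDInv_mem u))

lemma tendsto_hDInv_atTop (hD : 3 ≤ D) : Tendsto (hDInv D) atTop (𝓝 1) :=
  tendsto_atTop_isLUB (hDInv_strictMono hD).monotone
    (by rw [range_hDInv hD]; exact isLUB_Ioo (by norm_num))

lemma hasDerivAt_qDfun (hD : 3 ≤ D) (u : ℝ) : HasDerivAt (qDfun D) (hDInv D u) u :=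
  ((hDInv_continuous hD).integral_hasStrictDerivAt 0 u).hasDerivAt

end HD

section LineKernel

open Matrix

variable {ι : Type*} [Fintype ι] [DecidableEq ι]

def lineKernelMatrix (n : ι → ℝ) : Matrix ι ι ℝ := 1 - (n ⬝ᵥ n)⁻¹ • vecMulVec n n

lemma lineKernelMatrix_mulVec (n v : ι → ℝ) :
    lineKernelMatrix n *ᵥ v = v - ((n ⬝ᵥ v) / (n ⬝ᵥ n)) • n := by
  ext i
  simp only [lineKernelMatrix, sub_mulVec, one_mulVec, smul_mulVec, vecMulVec_mulVec,
    op_smul_eq_smul, Pi.sub_apply, Pi.smul_apply, smul_eq_mul, div_eq_inv_mul, sub_right_inj]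
  ring

lemma lineKernelMatrix_mulVec_eq_zero_iff {n : ι → ℝ} (hn : n ≠ 0) {v : ι → ℝ} :
    lineKernelMatrix n *ᵥ v = 0 ↔ ∃ t : ℝ, v = t • n := by
  rw [lineKernelMatrix_mulVec, sub_eq_zero]
  refine ⟨fun h => ⟨_, h⟩, ?_⟩
  rintro ⟨t, rfl⟩
  rw [dotProduct_smul, smul_eq_mul, mul_div_assoc, div_self (mt dotProduct_self_eq_zero.1 hn),
    mul_one]

lemma lineKernelMatrix_mulVec_eq_iff {n : ι → ℝ} (hn : n ≠ 0) {x g : ι → ℝ} :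
    lineKernelMatrix n *ᵥ x = lineKernelMatrix n *ᵥ g ↔ ∃ t : ℝ, x = g + t • n := by
  simp_rw [← sub_eq_zero (a := lineKernelMatrix n *ᵥ x), ← mulVec_sub,
    lineKernelMatrix_mulVec_eq_zero_iff hn, sub_eq_iff_eq_add']

end LineKernel

section Potential

variable {d D : ℕ} {α : ℝ}

lemma DQ_zero_right (hD : 3 ≤ D) (α : ℝ) (x : Fin d → ℝ) :
    DQ D α x 0 = Qpot D α x - Qpot D α (0 : Fin d → ℝ) := by
  simp [DQ, hDInv_zero hD]

lemma hasDerivAt_Qpot_add_smul (hD : 3 ≤ D) (hα : α ≠ 0) (x v : Fin d → ℝ) (t : ℝ) :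
    HasDerivAt (fun s => Qpot D α (x + s • v)) (∑ i, v i * hDInv D ((x i + t * v i) / α)) t := by
  refine HasDerivAt.fun_sum fun i _ => ?_
  have hline : HasDerivAt (fun s => (x i + s * v i) / α) (v i / α) t :=
    ((hasDerivAt_mul_const (v i)).const_add (x i)).div_const α
  exact (((hasDerivAt_qDfun hD _).comp t hline).const_mul α).congr_deriv (by field_simp)

end Potential

lemma StrictMono.lt_of_hasDerivAt_of_eq_zero {ψ φ : ℝ → ℝ} (hφ : StrictMono φ)
    (hψ : ∀ t, HasDerivAt ψ (φ t) t) {t₀ t : ℝ} (h₀ : φ t₀ = 0) (ht : t ≠ t₀) : ψ t₀ < ψ t := by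
  have hcont : Continuous ψ := continuous_iff_continuousAt.2 fun s => (hψ s).continuousAt
  rcases ht.lt_or_gt with ht | ht
  · obtain ⟨c, hc, hslope⟩ := exists_hasDerivAt_eq_slope ψ φ ht hcont.continuousOn
      fun s _ => hψ s
    have : (ψ t₀ - ψ t) / (t₀ - t) < 0 := hslope ▸ h₀ ▸ hφ hc.2
    linarith [(div_neg_iff.1 this).resolve_left (by rintro ⟨-, h⟩; linarith)]
  · obtain ⟨c, hc, hslope⟩ := exists_hasDerivAt_eq_slope ψ φ ht hcont.continuousOn
      fun s _ => hψ s
    have : 0 < (ψ t - ψ t₀) / (t - t₀) := hslope ▸ h₀ ▸ hφ hc.1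
    linarith [(div_pos_iff.1 this).resolve_right (by rintro ⟨-, h⟩; linarith)]

namespace SharpExample

open Matrix

variable {m D : ℕ} {ρ α : ℝ}

def kerVec (m : ℕ) (ρ : ℝ) : Fin (m + 1) → ℝ := Fin.cons (-(ρ * m)) fun _ => 1

@[simp] lemma kerVec_zero : kerVec m ρ 0 = -(ρ * m) := rfl

@[simp] lemma kerVec_succ (i : Fin m) : kerVec m ρ i.succ = 1 := rfl

def gStar (m : ℕ) : Fin (m + 1) → ℝ := Pi.single 0 1

@[simp] lemma gStar_zero : gStar m 0 = 1 := Pi.single_eq_same _ _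

@[simp] lemma gStar_succ (i : Fin m) : gStar m i.succ = 0 :=
  Pi.single_eq_of_ne (Fin.succ_ne_zero i) _

lemma kerVec_ne_zero (hm : 0 < m) : kerVec m ρ ≠ 0 := fun h => by
  simpa only [kerVec_succ, Pi.zero_apply, one_ne_zero] using congrFun h (Fin.succ ⟨0, hm⟩)

lemma sum_compl_zero (f : Fin (m + 1) → ℝ) :
    ∑ i ∈ ({0}ᶜ : Finset (Fin (m + 1))), f i = ∑ i : Fin m, f i.succ := by
  rw [← Fin.image_succ_univ, Finset.sum_image (Fin.succ_injective _).injOn]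

lemma suppF_gStar : suppF (gStar m) = {0} := by
  ext i
  cases i using Fin.cases <;> simp [suppF, Fin.succ_ne_zero]

lemma l1_add_smul_kerVec_ge (hρ0 : 0 ≤ ρ) (t : ℝ) :
    l1 (gStar m) + (1 - ρ) * m * |t| ≤ l1 (gStar m + t • kerVec m ρ) := by
  have h := abs_sub_abs_le_abs_sub 1 (t * (ρ * m))
  rw [abs_one, abs_mul, abs_of_nonneg (by positivity : 0 ≤ ρ * m)] at h
  simp only [l1, Fin.sum_univ_succ, gStar_zero, gStar_succ, kerVec_zero, kerVec_succ, Pi.add_apply,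
    Pi.smul_apply, smul_eq_mul, abs_one, abs_zero, mul_neg, ← sub_eq_add_neg, mul_one, zero_add,
    add_zero, Finset.sum_const_zero, Finset.sum_const, Finset.card_univ, Fintype.card_fin,
    nsmul_eq_mul]
  linarith

lemma l1_gStar_lt (hm : 0 < m) (hρ0 : 0 ≤ ρ) (hρ1 : ρ < 1) {x : Fin (m + 1) → ℝ}
    (hx : lineKernelMatrix (kerVec m ρ) *ᵥ x = lineKernelMatrix (kerVec m ρ) *ᵥ gStar m)
    (hne : x ≠ gStar m) : l1 (gStar m) < l1 x := by
  obtain ⟨t, rfl⟩ := (lineKernelMatrix_mulVec_eq_iff (kerVec_ne_zero hm)).1 hx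
  have ht : t ≠ 0 := by
    rintro rfl
    simp at hne
  have : 0 < (1 - ρ) * m * |t| := by
    have := sub_pos.2 hρ1
    positivity
  linarith [l1_add_smul_kerVec_ge (m := m) hρ0 t]

lemma l1_smul_kerVec (hρ0 : 0 ≤ ρ) (t : ℝ) : l1 (t • kerVec m ρ) = |t| * (m * (1 + ρ)) := by
  simp only [l1, Fin.sum_univ_succ, kerVec_zero, kerVec_succ, Pi.smul_apply, smul_eq_mul, abs_mul,
    abs_neg, abs_of_nonneg hρ0, Nat.abs_cast, abs_one, mul_one, Finset.sum_const, Finset.card_univ,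
    Fintype.card_fin, nsmul_eq_mul]
  ring

lemma sum_abs_compl_smul_kerVec (t : ℝ) :
    ∑ i ∈ (suppF (gStar m))ᶜ, |(t • kerVec m ρ) i| = m * |t| := by
  simp [suppF_gStar, sum_compl_zero]

lemma linftyOn_smul_kerVec (hm : 0 < m) (t : ℝ) :
    linftyOn (suppF (gStar m))ᶜ (t • kerVec m ρ) = |t| := by
  have : {r | ∃ i ∈ (suppF (gStar m))ᶜ, r = |(t • kerVec m ρ) i|} = {|t|} := by
    have : Nonempty (Fin m) := ⟨⟨0, hm⟩⟩
    ext r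
    simp only [suppF_gStar, ← Fin.image_succ_univ, Finset.mem_image]
    simp [eq_comm (a := r)]
  rw [linftyOn, this, csSup_singleton]

lemma card_compl_suppF_gStar : (suppF (gStar m))ᶜ.card = m := by
  rw [suppF_gStar, Finset.card_compl, Finset.card_singleton, Fintype.card_fin,
    Nat.add_sub_cancel]

lemma mulVec_eq_zero_and_ne_zero_iff (hm : 0 < m) {v : Fin (m + 1) → ℝ} :
    lineKernelMatrix (kerVec m ρ) *ᵥ v = 0 ∧ v ≠ 0 ↔ ∃ t : ℝ, t ≠ 0 ∧ v = t • kerVec m ρ := by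
  rw [lineKernelMatrix_mulVec_eq_zero_iff (kerVec_ne_zero hm)]
  constructor
  · rintro ⟨⟨t, rfl⟩, hv⟩
    exact ⟨t, by rintro rfl; simp at hv, rfl⟩
  · rintro ⟨t, ht, rfl⟩
    exact ⟨⟨t, rfl⟩, smul_ne_zero ht (kerVec_ne_zero hm)⟩

lemma rho_eq (hm : 0 < m) (hρ0 : 0 ≤ ρ) :
    rho (lineKernelMatrix (kerVec m ρ)) (gStar m) = ρ := by
  have hquot : ∀ t : ℝ, t ≠ 0 → (-∑ i ∈ suppF (gStar m),
      Real.sign (gStar m i) * (t • kerVec m ρ) i) /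
        ∑ i ∈ (suppF (gStar m))ᶜ, |(t • kerVec m ρ) i| = ρ * (t / |t|) := by
    intro t ht
    rw [sum_abs_compl_smul_kerVec, suppF_gStar]
    have : (m : ℝ) ≠ 0 := by positivity
    simp only [Finset.sum_singleton, gStar_zero, Real.sign_one, kerVec_zero, Pi.smul_apply,
      smul_eq_mul, mul_neg, one_mul, neg_neg]
    field_simp
  refine IsGreatest.csSup_eq ⟨⟨kerVec m ρ, ?_⟩, ?_⟩
  · obtain ⟨h₁, h₂⟩ := (mulVec_eq_zero_and_ne_zero_iff hm).2 ⟨1, one_ne_zero, (one_smul _ _).symm⟩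
    exact ⟨h₁, h₂, by simpa using (hquot 1 one_ne_zero).symm⟩
  · rintro r ⟨v, hker, hv, rfl⟩
    obtain ⟨t, ht, rfl⟩ := (mulVec_eq_zero_and_ne_zero_iff hm).1 ⟨hker, hv⟩
    rw [hquot t ht]
    exact mul_le_of_le_one_right hρ0 (div_le_one_of_le₀ (le_abs_self t) (abs_nonneg t))

lemma rhoTilde_eq (hm : 0 < m) (hρ0 : 0 ≤ ρ) :
    rhoTilde (lineKernelMatrix (kerVec m ρ)) (gStar m) = ρ := by
  have hquot : ∀ t : ℝ, t ≠ 0 → (∑ i ∈ suppF (gStar m), |(t • kerVec m ρ) i|) /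
        ∑ i ∈ (suppF (gStar m))ᶜ, |(t • kerVec m ρ) i| = ρ := by
    intro t ht
    rw [sum_abs_compl_smul_kerVec, suppF_gStar]
    have : (m : ℝ) ≠ 0 := by positivity
    simp only [Finset.sum_singleton, kerVec_zero, Pi.smul_apply, smul_eq_mul, abs_mul, abs_neg,
      abs_of_nonneg hρ0, Nat.abs_cast]
    field_simp
  refine IsGreatest.csSup_eq ⟨⟨kerVec m ρ, ?_⟩, ?_⟩
  · obtain ⟨h₁, h₂⟩ := (mulVec_eq_zero_and_ne_zero_iff hm).2 ⟨1, one_ne_zero, (one_smul _ _).symm⟩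
    exact ⟨h₁, h₂, by simpa using (hquot 1 one_ne_zero).symm⟩
  · rintro r ⟨v, hker, hv, rfl⟩
    obtain ⟨t, ht, rfl⟩ := (mulVec_eq_zero_and_ne_zero_iff hm).1 ⟨hker, hv⟩
    exact (hquot t ht).le

def lineSlope (D m : ℕ) (ρ α t : ℝ) : ℝ :=
  hDInv D (t / α) - ρ * hDInv D ((1 - ρ * m * t) / α)

lemma hasDerivAt_Qpot_kerLine (hD : 3 ≤ D) (hα : α ≠ 0) (t : ℝ) :
    HasDerivAt (fun s => Qpot D α (gStar m + s • kerVec m ρ)) (m * lineSlope D m ρ α t) t := by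
  refine (hasDerivAt_Qpot_add_smul hD hα _ _ t).congr_deriv ?_
  simp only [Fin.sum_univ_succ, kerVec_zero, kerVec_succ, gStar_zero, gStar_succ, neg_mul,
    ← sub_eq_add_neg, mul_comm t, one_mul, zero_add, Finset.sum_const, Finset.card_univ,
    Fintype.card_fin, nsmul_eq_mul, lineSlope]
  ring

lemma lineSlope_strictMono (hD : 3 ≤ D) (hρ0 : 0 ≤ ρ) (hα : 0 < α) :
    StrictMono (lineSlope D m ρ α) := fun s t hst => by
  have h₁ : hDInv D (s / α) < hDInv D (t / α) := hDInv_strictMono hD (by gcongr)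
  have h₂ : hDInv D ((1 - ρ * m * t) / α) ≤ hDInv D ((1 - ρ * m * s) / α) :=
    (hDInv_strictMono hD).monotone (by gcongr)
  have := mul_le_mul_of_nonneg_left h₂ hρ0
  simp only [lineSlope]
  linarith

lemma lineSlope_continuous (hD : 3 ≤ D) : Continuous (lineSlope D m ρ α) := by
  unfold lineSlope
  have := hDInv_continuous hD
  fun_prop

lemma exists_lineSlope_eq_zero (hD : 3 ≤ D) (hρ0 : 0 ≤ ρ) (hρ1 : ρ < 1) (hα : 0 < α) :
    ∃ t, lineSlope D m ρ α t = 0 := by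
  have hslope : ∀ w ∈ Ioo (-1 : ℝ) 1, ∃ c ∈ Icc (-ρ) ρ,
      lineSlope D m ρ α (α * hDfun D w) = w - c := by
    intro w hw
    refine ⟨ρ * hDInv D ((1 - ρ * m * (α * hDfun D w)) / α), ?_, ?_⟩
    · obtain ⟨h₁, h₂⟩ := hDInv_mem (D := D) ((1 - ρ * m * (α * hDfun D w)) / α)
      constructor <;> nlinarith
    · rw [lineSlope, mul_div_cancel_left₀ _ hα.ne', hDInv_hDfun hD hw]
  obtain ⟨c₁, hc₁, h₁⟩ := hslope (-(1 + ρ) / 2) ⟨by linarith, by linarith⟩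
  obtain ⟨c₂, hc₂, h₂⟩ := hslope ((1 + ρ) / 2) ⟨by linarith, by linarith⟩
  exact intermediate_value_univ (α * hDfun D (-(1 + ρ) / 2)) (α * hDfun D ((1 + ρ) / 2))
    (lineSlope_continuous hD) ⟨by linarith [hc₁.1], by linarith [hc₂.2]⟩

lemma forall_Qpot_kerLine_le_iff (hD : 3 ≤ D) (hm : 0 < m) (hρ0 : 0 ≤ ρ) (hα : 0 < α) {t : ℝ} :
    (∀ s : ℝ, Qpot D α (gStar m + t • kerVec m ρ) ≤ Qpot D α (gStar m + s • kerVec m ρ)) ↔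
      lineSlope D m ρ α t = 0 := by
  have hderiv := hasDerivAt_Qpot_kerLine (m := m) (ρ := ρ) hD hα.ne'
  have hm' : (0 : ℝ) < m := Nat.cast_pos.2 hm
  constructor
  · intro hmin
    have hloc : IsLocalMin (fun s => Qpot D α (gStar m + s • kerVec m ρ)) t :=
      Filter.Eventually.of_forall hmin
    have := hloc.hasDerivAt_eq_zero (hderiv t)
    exact (mul_eq_zero.1 this).resolve_left hm'.ne'
  · intro h₀ s
    rcases eq_or_ne s t with rfl | hs
    · rfl
    · refine ((lineSlope_strictMono hD hρ0 hα).const_mul hm').lt_of_hasDerivAt_of_eq_zero hderiv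
        (by rw [h₀, mul_zero]) hs |>.le

lemma isBregmanMin_iff (hD : 3 ≤ D) (hm : 0 < m) (hρ0 : 0 ≤ ρ) (hα : 0 < α)
    (x : Fin (m + 1) → ℝ) :
    (lineKernelMatrix (kerVec m ρ) *ᵥ x = lineKernelMatrix (kerVec m ρ) *ᵥ gStar m ∧
        ∀ z, lineKernelMatrix (kerVec m ρ) *ᵥ z = lineKernelMatrix (kerVec m ρ) *ᵥ gStar m →
          DQ D α x 0 ≤ DQ D α z 0) ↔
      ∃ t, x = gStar m + t • kerVec m ρ ∧ lineSlope D m ρ α t = 0 := by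
  simp only [lineKernelMatrix_mulVec_eq_iff (kerVec_ne_zero hm), DQ_zero_right hD,
    sub_le_sub_iff_right]
  constructor
  · rintro ⟨⟨t, rfl⟩, hmin⟩
    exact ⟨t, rfl, (forall_Qpot_kerLine_le_iff hD hm hρ0 hα).1 fun s => hmin _ ⟨s, rfl⟩⟩
  · rintro ⟨t, rfl, ht⟩
    exact ⟨⟨t, rfl⟩, by
      rintro z ⟨s, rfl⟩
      exact (forall_Qpot_kerLine_le_iff hD hm hρ0 hα).2 ht s⟩

lemma tendsto_div_of_lineSlope_eq_zero (hD : 3 ≤ D) (hρ0 : 0 ≤ ρ) (hρ1 : ρ < 1) {T : ℝ → ℝ}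
    (hT : ∀ α, 0 < α → lineSlope D m ρ α (T α) = 0) :
    Tendsto (fun α => T α / α) (𝓝[>] 0) (𝓝 (hDfun D ρ)) := by
  have hρ : ρ ∈ Ioo (-1 : ℝ) 1 := ⟨by linarith, hρ1⟩
  set arg := fun α => (1 - ρ * m * T α) / α
  have hfix : ∀ α, 0 < α → hDInv D (T α / α) = ρ * hDInv D (arg α) := fun α hα =>
    sub_eq_zero.1 (hT α hα)
  have hT_le : ∀ α, 0 < α → T α ≤ α * hDfun D ρ := fun α hα => by
    rw [← div_le_iff₀' hα, ← (hDInv_strictMono hD).le_iff_le, hDInv_hDfun hD hρ, hfix α hα]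
    exact mul_le_of_le_one_right hρ0 (hDInv_mem _).2.le
  have harg : Tendsto arg (𝓝[>] 0) atTop := by
    refine tendsto_atTop_mono' _ ?_
      (tendsto_atTop_add_const_right _ (-(ρ * m * hDfun D ρ)) tendsto_inv_nhdsGT_zero)
    filter_upwards [self_mem_nhdsWithin] with α (hα : 0 < α)
    have : ρ * m * T α ≤ ρ * m * (α * hDfun D ρ) :=
      mul_le_mul_of_nonneg_left (hT_le α hα) (by positivity)
    rw [le_div_iff₀ hα]
    nlinarith [mul_inv_cancel₀ hα.ne']
  have hcont : ContinuousAt (hDfun D) ρ := hDfun_continuousOn.continuousAt (isOpen_Ioo.mem_nhds hρ)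
  have hlim := hcont.tendsto.comp (by simpa using ((tendsto_hDInv_atTop hD).comp harg).const_mul ρ)
  refine hlim.congr' ?_
  filter_upwards [self_mem_nhdsWithin] with α (hα : 0 < α)
  rw [Function.comp_apply, ← hfix α hα, hDfun_hDInv hD]

end SharpExample

open SharpExample in
/-- asymptotic sharpness of the bounds in the deep case D ≥ 3. -/
theorem deep_sharpness (d D : ℕ) (hd : 3 ≤ d) (hD3 : 3 ≤ D)
    (ρ : ℝ) (hρ0 : 0 ≤ ρ) (hρ1 : ρ < 1) :
    ∃ (N : ℕ) (A : Matrix (Fin N) (Fin d) ℝ) (y : Fin N → ℝ) (g : Fin d → ℝ),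
      A.mulVec g = y ∧
      (∀ x : Fin d → ℝ, A.mulVec x = y → l1 g ≤ l1 x) ∧
      (∀ x : Fin d → ℝ, A.mulVec x = y → l1 x = l1 g → x = g) ∧
      rho A g = ρ ∧
      (∀ α : ℝ, 0 < α → ∃! x : Fin d → ℝ,
        A.mulVec x = y ∧ ∀ z : Fin d → ℝ, A.mulVec z = y → DQ D α x 0 ≤ DQ D α z 0) ∧
      (∀ xinf : ℝ → Fin d → ℝ,
        (∀ α : ℝ, 0 < α → A.mulVec (xinf α) = y ∧
          ∀ z : Fin d → ℝ, A.mulVec z = y → DQ D α (xinf α) 0 ≤ DQ D α z 0) →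
        Filter.Tendsto
          (fun α : ℝ => l1 (fun i => xinf α i - g i) /
            (α * ((suppF g)ᶜ.card : ℝ) * (1 + rhoTilde A g)))
          (nhdsWithin (0 : ℝ) (Set.Ioi 0)) (nhds (hDfun D ρ)) ∧
        Filter.Tendsto
          (fun α : ℝ => linftyOn ((suppF g)ᶜ) (fun i => xinf α i - g i) / α)
          (nhdsWithin (0 : ℝ) (Set.Ioi 0)) (nhds (hDfun D ρ))) := by
  obtain ⟨m, rfl⟩ : ∃ m, d = m + 1 := ⟨d - 1, by omega⟩
  have hm : 0 < m := by omega
  refine ⟨m + 1, lineKernelMatrix (kerVec m ρ), _, gStar m, rfl, ?_, ?_, rho_eq hm hρ0, ?_, ?_⟩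
  · intro x hx
    rcases eq_or_ne x (gStar m) with rfl | hne
    exacts [le_rfl, (l1_gStar_lt hm hρ0 hρ1 hx hne).le]
  · intro x hx hl1
    by_contra hne
    exact (l1_gStar_lt hm hρ0 hρ1 hx hne).ne' hl1
  · intro α hα
    obtain ⟨t₀, h₀⟩ := exists_lineSlope_eq_zero (m := m) hD3 hρ0 hρ1 hα
    refine ⟨_, (isBregmanMin_iff hD3 hm hρ0 hα _).2 ⟨t₀, rfl, h₀⟩, fun x hx => ?_⟩
    obtain ⟨t, rfl, ht⟩ := (isBregmanMin_iff hD3 hm hρ0 hα x).1 hx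
    rw [(lineSlope_strictMono hD3 hρ0 hα).injective (ht.trans h₀.symm)]
  · intro xinf H
    choose! T hxT hT using fun α (hα : 0 < α) => (isBregmanMin_iff hD3 hm hρ0 hα _).1 (H α hα)
    have hdiff : ∀ α, 0 < α → (fun i => xinf α i - gStar m i) = T α • kerVec m ρ := fun α hα => by
      ext i
      simp [hxT α hα]
    have hlim := (tendsto_div_of_lineSlope_eq_zero hD3 hρ0 hρ1 hT).abs
    rw [abs_of_nonneg (hDfun_nonneg hD3 hρ0 hρ1)] at hlim
    constructor <;> refine hlim.congr' (eventually_mem_nhdsWithin.mono fun α (hα : 0 < α) => ?_)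
    · dsimp only
      rw [hdiff α hα, l1_smul_kerVec hρ0, card_compl_suppF_gStar, rhoTilde_eq hm hρ0, abs_div,
        abs_of_pos hα]
      field_simp
    · dsimp only
      rw [hdiff α hα, linftyOn_smul_kerVec hm, abs_div, abs_of_pos hα]
end
end

section
/- Assume A ∈ ℝ^{N×d} and y ∈ ℝ^N satisfy the standing assumption (non-unique case), and let N ⊂ ker(A) be any subspace with T ∩ N = {0} and T + N = ker(A). Then: (1) for every n ∈ N with n ≠ 0 one has n_{S^c} ≠ 0, so the generalized null space constants ρ(N), ρ̃(N), ρ⁻(N) are well-defined; (2) if N ≠ {0}, then 0 ≤ ρ(N) < 1, 0 ≤ ρ̃(N) < ∞, 0 ≤ ρ⁻(N) < ∞, and the three suprema are attained by some n ∈ N\{0}. -/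
open scoped BigOperators

noncomputable section

/-- The set of ℓ¹-minimizers among the solutions of A x = y. -/
def Lmin {N d : ℕ} (A : Matrix (Fin N) (Fin d) ℝ) (y : Fin N → ℝ) : Set (Fin d → ℝ) :=
  { x | A.mulVec x = y ∧ ∀ z, A.mulVec z = y → l1 x ≤ l1 z }

open Classical in
/-- The generalized support S = ∪_{x ∈ L_min} supp(x). -/
def genS {N d : ℕ} (A : Matrix (Fin N) (Fin d) ℝ) (y : Fin N → ℝ) : Finset (Fin d) :=
  Finset.univ.filter (fun i => ∃ x ∈ Lmin A y, x i ≠ 0)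

/-- The tangent space T = span{x - x' : x, x' ∈ L_min}. -/
def Tspace {N d : ℕ} (A : Matrix (Fin N) (Fin d) ℝ) (y : Fin N → ℝ) :
    Submodule ℝ (Fin d → ℝ) :=
  Submodule.span ℝ { v | ∃ x ∈ Lmin A y, ∃ x' ∈ Lmin A y, v = x - x' }

/-- The set of quotients whose supremum is the generalized null space constant ρ(N). -/
def grhoSet {d : ℕ} (S : Finset (Fin d)) (σ : Fin d → ℝ) (Nset : Set (Fin d → ℝ)) :
    Set ℝ :=
  { r | ∃ n ∈ Nset, n ≠ 0 ∧ r = (-∑ i ∈ S, σ i * n i) / ∑ i ∈ Sᶜ, |n i| }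

/-- The generalized null space constant ρ(N). -/
def grho {d : ℕ} (S : Finset (Fin d)) (σ : Fin d → ℝ) (Nset : Set (Fin d → ℝ)) : ℝ :=
  sSup (grhoSet S σ Nset)

/-- The set of quotients whose supremum is the generalized null space constant ρ⁻(N). -/
def grhoMinusSet {d : ℕ} (S : Finset (Fin d)) (σ : Fin d → ℝ) (Nset : Set (Fin d → ℝ)) :
    Set ℝ :=
  { r | ∃ n ∈ Nset, n ≠ 0 ∧
      r = (∑ i ∈ S.filter (fun i => σ i * n i < 0), |n i|) / ∑ i ∈ Sᶜ, |n i| }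

/-- The generalized null space constant ρ⁻(N). -/
def grhoMinus {d : ℕ} (S : Finset (Fin d)) (σ : Fin d → ℝ) (Nset : Set (Fin d → ℝ)) : ℝ :=
  sSup (grhoMinusSet S σ Nset)

/-- The set of quotients whose supremum is the generalized null space constant ρ̃(N). -/
def grhoTildeSet {d : ℕ} (S : Finset (Fin d)) (σ : Fin d → ℝ) (Nset : Set (Fin d → ℝ)) :
    Set ℝ :=
  { r | ∃ n ∈ Nset, n ≠ 0 ∧ r = (∑ i ∈ S, |n i|) / ∑ i ∈ Sᶜ, |n i| }

/-- The generalized null space constant ρ̃(N). -/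
def grhoTilde {d : ℕ} (S : Finset (Fin d)) (σ : Fin d → ℝ) (Nset : Set (Fin d → ℝ)) : ℝ :=
  sSup (grhoTildeSet S σ Nset)

/-! ### Auxiliary lemmas -/

lemma l1_nonneg {d : ℕ} (x : Fin d → ℝ) : 0 ≤ l1 x :=
  Finset.sum_nonneg fun _ _ => abs_nonneg _

lemma continuous_l1 {d : ℕ} : Continuous (l1 (d := d)) :=
  continuous_finset_sum _ fun i _ => (continuous_apply i).abs

lemma abs_le_l1 {d : ℕ} (x : Fin d → ℝ) (i : Fin d) : |x i| ≤ l1 x :=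
  Finset.single_le_sum (fun j _ => abs_nonneg (x j)) (Finset.mem_univ i)

/-- Existence of an ℓ¹-minimizer. -/
lemma exists_lmin {N d : ℕ} (A : Matrix (Fin N) (Fin d) ℝ) (y : Fin N → ℝ)
    (hex : ∃ x : Fin d → ℝ, A.mulVec x = y) : ∃ x, x ∈ Lmin A y := by
  obtain ⟨x0, hx0⟩ := hex
  set C : Set (Fin d → ℝ) := {x | A.mulVec x = y ∧ l1 x ≤ l1 x0} with hC
  have hclosed : IsClosed C := by
    apply IsClosed.inter
    · exact isClosed_eq (Matrix.mulVecLin A).continuous_of_finiteDimensional continuous_const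
    · exact isClosed_le continuous_l1 continuous_const
  have hsub : C ⊆ Metric.closedBall 0 (l1 x0) := by
    intro x hx
    rw [Metric.mem_closedBall, dist_zero_right]
    refine (pi_norm_le_iff_of_nonneg (l1_nonneg x0)).2 fun i => ?_
    exact (abs_le_l1 x i).trans hx.2
  have hcomp : IsCompact C :=
    (isCompact_closedBall 0 (l1 x0)).of_isClosed_subset hclosed hsub
  have hne : C.Nonempty := ⟨x0, hx0, le_refl _⟩
  obtain ⟨xm, hxm, hmin⟩ := hcomp.exists_isMinOn hne continuous_l1.continuousOn
  refine ⟨xm, hxm.1, fun z hz => ?_⟩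
  by_cases h : l1 z ≤ l1 x0
  · exact hmin ⟨hz, h⟩
  · exact (hmin ⟨hx0, le_refl _⟩).trans (le_of_not_ge h)

lemma mem_genS {N d : ℕ} {A : Matrix (Fin N) (Fin d) ℝ} {y : Fin N → ℝ} {i : Fin d} :
    i ∈ genS A y ↔ ∃ x ∈ Lmin A y, x i ≠ 0 := by
  classical
  simp [genS]

lemma lmin_zero_off_genS {N d : ℕ} {A : Matrix (Fin N) (Fin d) ℝ} {y : Fin N → ℝ}
    {x : Fin d → ℝ} (hx : x ∈ Lmin A y) {i : Fin d} (hi : i ∉ genS A y) : x i = 0 := by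
  by_contra h
  exact hi (mem_genS.2 ⟨x, hx, h⟩)

lemma abs_eq_sign_mul {σv v : ℝ} (hσ : σv = 1 ∨ σv = -1) (h : 0 ≤ σv * v) :
    |v| = σv * v := by
  rcases hσ with h1 | h1 <;> subst h1
  · rw [one_mul] at h ⊢; exact abs_of_nonneg h
  · simp only [neg_one_mul] at h ⊢
    rw [abs_of_nonpos (by linarith)]

lemma abs_sign_mul {σv v : ℝ} (hσ : σv = 1 ∨ σv = -1) : |σv * v| = |v| := by
  rcases hσ with h1 | h1 <;> subst h1 <;> simp

/-- An ℓ¹-minimizer with strictly "positive" sign pattern on all of S. -/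
lemma exists_full_support_min {N d : ℕ} (A : Matrix (Fin N) (Fin d) ℝ) (y : Fin N → ℝ)
    (hy : y ≠ 0)
    (σ : Fin d → ℝ) (hσ : ∀ i, σ i = 1 ∨ σ i = -1)
    (hσsign : ∀ x ∈ Lmin A y, ∀ i, 0 ≤ σ i * x i)
    (hlmin : ∃ x, x ∈ Lmin A y) :
    ∃ xb ∈ Lmin A y, (∀ i ∈ genS A y, 0 < σ i * xb i) := by
  classical
  set S := genS A y with hS
  obtain ⟨x0, hx0⟩ := hlmin
  have hSne : S.Nonempty := by
    have hx00 : x0 ≠ 0 := by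
      intro h
      apply hy
      rw [← hx0.1, h, Matrix.mulVec_zero]
    obtain ⟨i, hi⟩ := Function.ne_iff.1 hx00
    exact ⟨i, mem_genS.2 ⟨x0, hx0, hi⟩⟩
  have hch : ∀ i ∈ S, ∃ x ∈ Lmin A y, x i ≠ 0 := fun i hi => mem_genS.1 hi
  choose! c hc1 hc2 using hch
  set t : ℝ := (S.card : ℝ)⁻¹ with ht
  have hcard : (0:ℝ) < (S.card : ℝ) := by
    exact_mod_cast Finset.card_pos.2 hSne
  have htpos : 0 < t := inv_pos.2 hcard
  set xb : Fin d → ℝ := t • ∑ i ∈ S, c i with hxb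
  have hfeas : A.mulVec xb = y := by
    rw [hxb, Matrix.mulVec_smul]
    have hms : A.mulVec (∑ i ∈ S, c i) = ∑ i ∈ S, A.mulVec (c i) := by
      have h := map_sum (Matrix.mulVecLin A) c S
      simpa only [Matrix.mulVecLin_apply] using h
    rw [hms]
    have hsum : ∑ i ∈ S, A.mulVec (c i) = (S.card : ℝ) • y := by
      rw [Finset.sum_congr rfl (fun i hi => (hc1 i hi).1), Finset.sum_const,
        ← Nat.cast_smul_eq_nsmul ℝ]
    rw [hsum, smul_smul, ht, inv_mul_cancel₀ (ne_of_gt hcard), one_smul]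
  have hxbmem : xb ∈ Lmin A y := by
    refine ⟨hfeas, fun z hz => ?_⟩
    have hxbj : ∀ j, xb j = t * ∑ i ∈ S, c i j := by
      intro j; simp [hxb, Finset.sum_apply]
    have hstep : ∀ j, |xb j| ≤ t * ∑ i ∈ S, |c i j| := by
      intro j
      rw [hxbj j, abs_mul, abs_of_pos htpos]
      exact mul_le_mul_of_nonneg_left (Finset.abs_sum_le_sum_abs _ _) htpos.le
    have h1 : l1 xb ≤ t * ∑ i ∈ S, l1 (c i) := by
      calc l1 xb ≤ ∑ j, t * ∑ i ∈ S, |c i j| :=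
            Finset.sum_le_sum fun j _ => hstep j
        _ = t * ∑ j, ∑ i ∈ S, |c i j| := by rw [Finset.mul_sum]
        _ = t * ∑ i ∈ S, l1 (c i) := by rw [Finset.sum_comm]; rfl
    have h2 : ∑ i ∈ S, l1 (c i) ≤ (S.card : ℝ) * l1 z := by
      calc ∑ i ∈ S, l1 (c i) ≤ ∑ _i ∈ S, l1 z :=
            Finset.sum_le_sum fun i hi => (hc1 i hi).2 z hz
        _ = (S.card : ℝ) * l1 z := by rw [Finset.sum_const]; simp [mul_comm]
    calc l1 xb ≤ t * ∑ i ∈ S, l1 (c i) := h1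
      _ ≤ t * ((S.card : ℝ) * l1 z) := mul_le_mul_of_nonneg_left h2 (le_of_lt htpos)
      _ = l1 z := by rw [← mul_assoc, ht, inv_mul_cancel₀ (ne_of_gt hcard), one_mul]
  refine ⟨xb, hxbmem, fun j hj => ?_⟩
  have hxbj : xb j = t * ∑ i ∈ S, c i j := by simp [hxb, Finset.sum_apply]
  have hrw : σ j * xb j = ∑ i ∈ S, t * (σ j * c i j) := by
    rw [hxbj, Finset.mul_sum, Finset.mul_sum]
    exact Finset.sum_congr rfl fun i _ => by ring
  rw [hrw]
  refine Finset.sum_pos'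
    (fun i hi => mul_nonneg htpos.le (hσsign (c i) (hc1 i hi) j)) ⟨j, hj, ?_⟩
  refine mul_pos htpos ?_
  have h0 := hσsign (c j) (hc1 j hj) j
  have hne : σ j * c j j ≠ 0 :=
    mul_ne_zero (by rcases hσ j with h|h <;> rw [h] <;> norm_num) (hc2 j hj)
  exact lt_of_le_of_ne h0 (Ne.symm hne)

/-- KEY: for every nonzero n in the complement N, ∑_S σ n + ‖n_{S^c}‖₁ > 0. -/
lemma key_pos {N d : ℕ} (A : Matrix (Fin N) (Fin d) ℝ) (y : Fin N → ℝ)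
    (hy : y ≠ 0)
    (σ : Fin d → ℝ) (hσ : ∀ i, σ i = 1 ∨ σ i = -1)
    (hσsign : ∀ x ∈ Lmin A y, ∀ i, 0 ≤ σ i * x i)
    (Nsub : Submodule ℝ (Fin d → ℝ))
    (hNker : Nsub ≤ LinearMap.ker (Matrix.mulVecLin A))
    (hNT : Tspace A y ⊓ Nsub = ⊥)
    (hlmin : ∃ x, x ∈ Lmin A y)
    (n : Fin d → ℝ) (hn : n ∈ Nsub) (hn0 : n ≠ 0) :
    0 < (∑ i ∈ genS A y, σ i * n i) + ∑ i ∈ (genS A y)ᶜ, |n i| := by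
  classical
  set S := genS A y with hS
  obtain ⟨xb, hxb, hxbpos⟩ := exists_full_support_min A y hy σ hσ hσsign hlmin
  by_cases hSne : S.Nonempty
  case neg =>
    exfalso
    apply hy
    have hxb0 : xb = 0 := by
      funext i
      exact lmin_zero_off_genS hxb (fun hi => hSne ⟨i, hi⟩)
    rw [← hxb.1, hxb0, Matrix.mulVec_zero]
  set m : ℝ := S.inf' hSne (fun i => σ i * xb i) with hm
  have hmpos : 0 < m := (Finset.lt_inf'_iff hSne).2 fun i hi => hxbpos i hi
  set B : ℝ := ∑ i, |n i| with hB
  have hBnn : 0 ≤ B := Finset.sum_nonneg fun i _ => abs_nonneg _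
  have hB1 : (0:ℝ) < 1 + B := by linarith
  set ε : ℝ := m / (1 + B) with hε
  have hεpos : 0 < ε := div_pos hmpos hB1
  have hsmall : ∀ i ∈ S, ε * |n i| < σ i * xb i := by
    intro i hi
    have h1 : |n i| ≤ B := Finset.single_le_sum (fun j _ => abs_nonneg (n j)) (Finset.mem_univ i)
    have h2 : ε * |n i| ≤ ε * B := mul_le_mul_of_nonneg_left h1 hεpos.le
    have h3 : ε * B < ε * (1 + B) := by nlinarith
    have h4 : ε * (1 + B) = m := div_mul_cancel₀ m (ne_of_gt hB1)
    have h5 : m ≤ σ i * xb i := Finset.inf'_le _ hi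
    linarith
  set w : Fin d → ℝ := xb + ε • n with hw
  have hwfeas : A.mulVec w = y := by
    rw [hw, Matrix.mulVec_add, Matrix.mulVec_smul]
    have : A.mulVec n = 0 := hNker hn
    rw [this, smul_zero, add_zero, hxb.1]
  have hwpos : ∀ i ∈ S, 0 < σ i * w i := by
    intro i hi
    have h1 : σ i * w i = σ i * xb i + ε * (σ i * n i) := by
      simp [hw]; ring
    have h2 : -|n i| ≤ σ i * n i := by
      rw [← abs_sign_mul (v := n i) (hσ i)]; exact neg_abs_le _
    have h3 := hsmall i hi
    nlinarith
  set E : ℝ := (∑ i ∈ S, σ i * n i) + ∑ i ∈ Sᶜ, |n i| with hE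
  have hl1xb : l1 xb = ∑ i ∈ S, σ i * xb i := by
    unfold l1
    rw [← Finset.sum_add_sum_compl S]
    have h1 : ∑ i ∈ Sᶜ, |xb i| = 0 := by
      refine Finset.sum_eq_zero fun i hi => ?_
      rw [lmin_zero_off_genS hxb (Finset.mem_compl.1 hi), abs_zero]
    have h2 : ∑ i ∈ S, |xb i| = ∑ i ∈ S, σ i * xb i :=
      Finset.sum_congr rfl fun i hi => abs_eq_sign_mul (hσ i) (hσsign xb hxb i)
    rw [h1, h2, add_zero]
  have hl1w : l1 w = l1 xb + ε * E := by
    unfold l1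
    rw [← Finset.sum_add_sum_compl S]
    have h1 : ∑ i ∈ S, |w i| = ∑ i ∈ S, (σ i * xb i + ε * (σ i * n i)) := by
      refine Finset.sum_congr rfl fun i hi => ?_
      rw [abs_eq_sign_mul (hσ i) (hwpos i hi).le]
      simp [hw]; ring
    have h2 : ∑ i ∈ Sᶜ, |w i| = ∑ i ∈ Sᶜ, ε * |n i| := by
      refine Finset.sum_congr rfl fun i hi => ?_
      have : w i = ε * n i := by
        simp [hw, lmin_zero_off_genS hxb (Finset.mem_compl.1 hi)]
      rw [this, abs_mul, abs_of_pos hεpos]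
    have hl1xb' : (∑ i, |xb i|) = ∑ i ∈ S, σ i * xb i := hl1xb
    rw [h1, h2, Finset.sum_add_distrib, ← Finset.mul_sum, ← Finset.mul_sum, hl1xb', hE]
    ring
  have hEnn : 0 ≤ E := by
    have := hxb.2 w hwfeas
    rw [hl1w] at this
    nlinarith
  rcases lt_or_eq_of_le hEnn with h | h
  · exact h
  exfalso
  have hwmin : w ∈ Lmin A y := by
    refine ⟨hwfeas, fun z hz => ?_⟩
    rw [hl1w, ← h, mul_zero, add_zero]
    exact hxb.2 z hz
  have hT : ε • n ∈ Tspace A y := by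
    apply Submodule.subset_span
    exact ⟨w, hwmin, xb, hxb, by rw [hw]; abel⟩
  have hN : ε • n ∈ Nsub := Nsub.smul_mem ε hn
  have : ε • n ∈ Tspace A y ⊓ Nsub := ⟨hT, hN⟩
  rw [hNT, Submodule.mem_bot] at this
  rcases smul_eq_zero.1 this with h' | h'
  · exact hεpos.ne' h'
  · exact hn0 h'

/-- Generic: degree-0-homogeneous continuous quotient attains its max on a
nontrivial finite-dimensional subspace minus zero. -/
lemma max_attained {d : ℕ} (Nsub : Submodule ℝ (Fin d → ℝ)) (hne : Nsub ≠ ⊥)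
    (num den : (Fin d → ℝ) → ℝ)
    (hnum : Continuous num) (hden : Continuous den)
    (hdenpos : ∀ n ∈ Nsub, n ≠ 0 → 0 < den n)
    (hhom : ∀ t : ℝ, 0 < t → ∀ n : Fin d → ℝ,
      num (t • n) / den (t • n) = num n / den n) :
    ∃ n₀ ∈ Nsub, n₀ ≠ 0 ∧
      ∀ n ∈ Nsub, n ≠ 0 → num n / den n ≤ num n₀ / den n₀ := by
  classical
  obtain ⟨v, hv, hv0⟩ := Submodule.exists_mem_ne_zero_of_ne_bot hne
  set K : Set (Fin d → ℝ) := (Nsub : Set (Fin d → ℝ)) ∩ Metric.sphere 0 1 with hK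
  have hKcomp : IsCompact K :=
    ((isCompact_sphere (0 : Fin d → ℝ) 1).inter_left Nsub.closed_of_finiteDimensional)
  have hmemK : ∀ n : Fin d → ℝ, n ∈ Nsub → n ≠ 0 → (‖n‖⁻¹ • n) ∈ K := by
    intro n hn hn0
    refine ⟨Nsub.smul_mem _ hn, ?_⟩
    rw [mem_sphere_zero_iff_norm, norm_smul, norm_inv, norm_norm,
      inv_mul_cancel₀ (norm_ne_zero_iff.2 hn0)]
  have hKne : K.Nonempty := ⟨_, hmemK v hv hv0⟩
  have hKprop : ∀ n ∈ K, n ∈ Nsub ∧ n ≠ 0 := by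
    intro n hn
    refine ⟨hn.1, ?_⟩
    have : ‖n‖ = 1 := mem_sphere_zero_iff_norm.1 hn.2
    intro h; rw [h, norm_zero] at this; norm_num at this
  have hcont : ContinuousOn (fun n => num n / den n) K := by
    refine ContinuousOn.div hnum.continuousOn hden.continuousOn fun n hn => ?_
    exact (hdenpos n (hKprop n hn).1 (hKprop n hn).2).ne'
  obtain ⟨n₀, hn₀K, hmax⟩ := hKcomp.exists_isMaxOn hKne hcont
  refine ⟨n₀, (hKprop n₀ hn₀K).1, (hKprop n₀ hn₀K).2, fun n hn hn0 => ?_⟩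
  have ht : (0:ℝ) < ‖n‖⁻¹ := inv_pos.2 (norm_pos_iff.2 hn0)
  have := hhom ‖n‖⁻¹ ht n
  rw [← this]
  exact hmax (hmemK n hn hn0)

/-- Generic: from an attained maximum to sSup facts. -/
lemma sSup_facts (X : Set ℝ) (v : ℝ) (hmem : v ∈ X) (hub : ∀ r ∈ X, r ≤ v) :
    sSup X = v ∧ sSup X ∈ X ∧ BddAbove X := by
  have h1 : sSup X = v := le_antisymm (csSup_le ⟨v, hmem⟩ hub) (le_csSup ⟨v, hub⟩ hmem)
  exact ⟨h1, h1 ▸ hmem, ⟨v, hub⟩⟩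

/-- The ρ⁻ numerator as a sum of continuous functions. -/
lemma minus_num_eq {d : ℕ} (S : Finset (Fin d)) (σ : Fin d → ℝ)
    (hσ : ∀ i, σ i = 1 ∨ σ i = -1) (n : Fin d → ℝ) :
    (∑ i ∈ S.filter (fun i => σ i * n i < 0), |n i|) = ∑ i ∈ S, max (-(σ i * n i)) 0 := by
  rw [Finset.sum_filter]
  refine Finset.sum_congr rfl fun i _ => ?_
  by_cases h : σ i * n i < 0
  · rw [if_pos h, max_eq_left (by linarith), ← abs_sign_mul (hσ i), abs_of_neg h]
  · rw [if_neg h, max_eq_right (by push_neg at h; linarith)]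

/-- well-posedness of the generalized null space constants. -/
theorem gen_nullspace_constants_wellposed {N d : ℕ}
    (A : Matrix (Fin N) (Fin d) ℝ) (y : Fin N → ℝ)
    (hex : ∃ x : Fin d → ℝ, A.mulVec x = y)
    (hy : y ≠ 0)
    (hker : ∃ n : Fin d → ℝ, n ≠ 0 ∧ A.mulVec n = 0)
    (σ : Fin d → ℝ) (hσ : ∀ i, σ i = 1 ∨ σ i = -1)
    (hσsign : ∀ x ∈ Lmin A y, ∀ i, 0 ≤ σ i * x i)
    (Nsub : Submodule ℝ (Fin d → ℝ))
    (hNker : Nsub ≤ LinearMap.ker (Matrix.mulVecLin A))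
    (hNT : Tspace A y ⊓ Nsub = ⊥)
    (hNsum : Tspace A y ⊔ Nsub = LinearMap.ker (Matrix.mulVecLin A)) :
    (∀ n ∈ Nsub, n ≠ (0 : Fin d → ℝ) → ∃ i ∈ (genS A y)ᶜ, n i ≠ 0) ∧
    (Nsub ≠ ⊥ →
      (0 ≤ grho (genS A y) σ (Nsub : Set (Fin d → ℝ)) ∧
        grho (genS A y) σ (Nsub : Set (Fin d → ℝ)) < 1 ∧
        0 ≤ grhoTilde (genS A y) σ (Nsub : Set (Fin d → ℝ)) ∧
        BddAbove (grhoTildeSet (genS A y) σ (Nsub : Set (Fin d → ℝ))) ∧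
        0 ≤ grhoMinus (genS A y) σ (Nsub : Set (Fin d → ℝ)) ∧
        BddAbove (grhoMinusSet (genS A y) σ (Nsub : Set (Fin d → ℝ))) ∧
        grho (genS A y) σ (Nsub : Set (Fin d → ℝ)) ∈
          grhoSet (genS A y) σ (Nsub : Set (Fin d → ℝ)) ∧
        grhoTilde (genS A y) σ (Nsub : Set (Fin d → ℝ)) ∈
          grhoTildeSet (genS A y) σ (Nsub : Set (Fin d → ℝ)) ∧
        grhoMinus (genS A y) σ (Nsub : Set (Fin d → ℝ)) ∈
          grhoMinusSet (genS A y) σ (Nsub : Set (Fin d → ℝ)))) := by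
  classical
  have hlmin := exists_lmin A y hex
  set S := genS A y with hSdef
  have hkey : ∀ n ∈ Nsub, n ≠ (0 : Fin d → ℝ) →
      0 < (∑ i ∈ S, σ i * n i) + ∑ i ∈ Sᶜ, |n i| :=
    fun n hn hn0 => key_pos A y hy σ hσ hσsign Nsub hNker hNT hlmin n hn hn0
  have hdenpos : ∀ n ∈ Nsub, n ≠ (0 : Fin d → ℝ) → 0 < ∑ i ∈ Sᶜ, |n i| := by
    intro n hn hn0
    have h1 := hkey n hn hn0
    have h2 := hkey (-n) (Nsub.neg_mem hn) (neg_ne_zero.2 hn0)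
    have e1 : ∑ i ∈ S, σ i * (-n) i = -∑ i ∈ S, σ i * n i := by
      simp [mul_neg]
    have e2 : ∑ i ∈ Sᶜ, |(-n) i| = ∑ i ∈ Sᶜ, |n i| := by simp
    rw [e1, e2] at h2
    linarith
  constructor
  · intro n hn hn0
    by_contra hcon
    push_neg at hcon
    have : ∑ i ∈ Sᶜ, |n i| = 0 :=
      Finset.sum_eq_zero fun i hi => by rw [hcon i hi, abs_zero]
    exact absurd this (hdenpos n hn hn0).ne'
  intro hNbot
  -- common denominator
  set den : (Fin d → ℝ) → ℝ := fun n => ∑ i ∈ Sᶜ, |n i| with hden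
  have hdcont : Continuous den :=
    continuous_finset_sum _ fun i _ => (continuous_apply i).abs
  have hdscale : ∀ t : ℝ, 0 < t → ∀ n : Fin d → ℝ, den (t • n) = t * den n := by
    intro t ht n
    rw [hden]
    simp only [Pi.smul_apply, smul_eq_mul]
    rw [Finset.mul_sum]
    exact Finset.sum_congr rfl fun i _ => by rw [abs_mul, abs_of_pos ht]
  -- ρ
  obtain ⟨n₁, hn₁, hn₁0, hmax₁⟩ := max_attained Nsub hNbot
    (fun n => -∑ i ∈ S, σ i * n i) den
    (continuous_finset_sum _ fun i _ => continuous_const.mul (continuous_apply i)).neg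
    hdcont hdenpos
    (by
      intro t ht n
      have e1 : (-∑ i ∈ S, σ i * (t • n) i) = t * (-∑ i ∈ S, σ i * n i) := by
        simp only [Pi.smul_apply, smul_eq_mul]
        rw [mul_neg, Finset.mul_sum]
        congr 1
        exact Finset.sum_congr rfl fun i _ => by ring
      show (-∑ i ∈ S, σ i * (t • n) i) / den (t • n) = _
      rw [e1, hdscale t ht n, mul_div_mul_left _ _ ht.ne'])
  obtain ⟨hsup₁, hmem₁, hbdd₁⟩ := sSup_facts (grhoSet S σ (Nsub : Set (Fin d → ℝ)))
    ((-∑ i ∈ S, σ i * n₁ i) / den n₁)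
    ⟨n₁, hn₁, hn₁0, rfl⟩
    (by rintro r ⟨n, hn, hn0, rfl⟩; exact hmax₁ n hn hn0)
  -- ρ̃
  obtain ⟨n₂, hn₂, hn₂0, hmax₂⟩ := max_attained Nsub hNbot
    (fun n => ∑ i ∈ S, |n i|) den
    (continuous_finset_sum _ fun i _ => (continuous_apply i).abs)
    hdcont hdenpos
    (by
      intro t ht n
      have e1 : (∑ i ∈ S, |(t • n) i|) = t * ∑ i ∈ S, |n i| := by
        simp only [Pi.smul_apply, smul_eq_mul]
        rw [Finset.mul_sum]
        exact Finset.sum_congr rfl fun i _ => by rw [abs_mul, abs_of_pos ht]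
      show (∑ i ∈ S, |(t • n) i|) / den (t • n) = _
      rw [e1, hdscale t ht n, mul_div_mul_left _ _ ht.ne'])
  obtain ⟨hsup₂, hmem₂, hbdd₂⟩ := sSup_facts (grhoTildeSet S σ (Nsub : Set (Fin d → ℝ)))
    ((∑ i ∈ S, |n₂ i|) / den n₂)
    ⟨n₂, hn₂, hn₂0, rfl⟩
    (by rintro r ⟨n, hn, hn0, rfl⟩; exact hmax₂ n hn hn0)
  -- ρ⁻
  obtain ⟨n₃, hn₃, hn₃0, hmax₃⟩ := max_attained Nsub hNbot
    (fun n => ∑ i ∈ S.filter (fun i => σ i * n i < 0), |n i|) den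
    (by
      have : (fun n : Fin d → ℝ => ∑ i ∈ S.filter (fun i => σ i * n i < 0), |n i|)
          = fun n => ∑ i ∈ S, max (-(σ i * n i)) 0 := funext (minus_num_eq S σ hσ)
      rw [this]
      exact continuous_finset_sum _ fun i _ =>
        ((continuous_const.mul (continuous_apply i)).neg).max continuous_const)
    hdcont hdenpos
    (by
      intro t ht n
      have e1 : (∑ i ∈ S.filter (fun i => σ i * (t • n) i < 0), |(t • n) i|)
          = t * ∑ i ∈ S.filter (fun i => σ i * n i < 0), |n i| := by
        rw [minus_num_eq S σ hσ, minus_num_eq S σ hσ, Finset.mul_sum]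
        refine Finset.sum_congr rfl fun i _ => ?_
        simp only [Pi.smul_apply, smul_eq_mul]
        rcases le_total (σ i * n i) 0 with h | h
        · rw [max_eq_left (by nlinarith), max_eq_left (by linarith)]; ring
        · rw [max_eq_right (by nlinarith), max_eq_right (by linarith)]; ring
      show (∑ i ∈ S.filter (fun i => σ i * (t • n) i < 0), |(t • n) i|) / den (t • n) = _
      rw [e1, hdscale t ht n, mul_div_mul_left _ _ ht.ne'])
  obtain ⟨hsup₃, hmem₃, hbdd₃⟩ := sSup_facts (grhoMinusSet S σ (Nsub : Set (Fin d → ℝ)))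
    ((∑ i ∈ S.filter (fun i => σ i * n₃ i < 0), |n₃ i|) / den n₃)
    ⟨n₃, hn₃, hn₃0, rfl⟩
    (by rintro r ⟨n, hn, hn0, rfl⟩; exact hmax₃ n hn hn0)
  have hgrho : grho S σ (Nsub : Set (Fin d → ℝ)) = (-∑ i ∈ S, σ i * n₁ i) / den n₁ := hsup₁
  refine ⟨?_, ?_, ?_, hbdd₂, ?_, hbdd₃, hmem₁, hmem₂, hmem₃⟩
  · -- 0 ≤ grho
    have hnegmem : (-∑ i ∈ S, σ i * (-n₁) i) / den (-n₁)
        ∈ grhoSet S σ (Nsub : Set (Fin d → ℝ)) :=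
      ⟨-n₁, Nsub.neg_mem hn₁, neg_ne_zero.2 hn₁0, rfl⟩
    have he : (-∑ i ∈ S, σ i * (-n₁) i) / den (-n₁)
        = -((-∑ i ∈ S, σ i * n₁ i) / den n₁) := by
      have e1 : ∑ i ∈ S, σ i * (-n₁) i = -∑ i ∈ S, σ i * n₁ i := by simp [mul_neg]
      have e2 : den (-n₁) = den n₁ := by simp [hden]
      rw [e1, e2, neg_neg, ← neg_div, neg_neg]
    have hle := hmax₁ (-n₁) (Nsub.neg_mem hn₁) (neg_ne_zero.2 hn₁0)
    rw [show ((fun n => -∑ i ∈ S, σ i * n i) (-n₁) / den (-n₁))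
        = -((-∑ i ∈ S, σ i * n₁ i) / den n₁) from he] at hle
    rw [hgrho]
    linarith
  · -- grho < 1
    obtain ⟨n, hn, hn0, hval⟩ := hmem₁
    show sSup (grhoSet S σ (Nsub : Set (Fin d → ℝ))) < 1
    rw [hval, div_lt_one (hdenpos n hn hn0)]
    have := hkey n hn hn0
    linarith
  · -- 0 ≤ grhoTilde
    rw [show grhoTilde S σ (Nsub : Set (Fin d → ℝ)) = _ from hsup₂]
    exact div_nonneg (Finset.sum_nonneg fun i _ => abs_nonneg _) (hdenpos n₂ hn₂ hn₂0).le
  · -- 0 ≤ grhoMinus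
    rw [show grhoMinus S σ (Nsub : Set (Fin d → ℝ)) = _ from hsup₃]
    exact div_nonneg (Finset.sum_nonneg fun i _ => abs_nonneg _) (hdenpos n₃ hn₃ hn₃0).le
end
end

section
/- The following properties of arsinh hold: (i) for every t > 0, the quantity Δ(t) := arsinh(t/2) − log(t) is nonnegative, the function t ↦ Δ(t) is decreasing on (0,∞), and Δ(t) ≤ 1/t² as well as exp(Δ(t)) ≤ 1 + 1/t²; (ii) for all s, t ∈ ℝ\{0} with sign(t) = sign(s), one has |arsinh(t) − arsinh(s)| ≤ |log(t/s)|; (iii) the map ℝ → ℝ, t ↦ t·arsinh(t), is convex. -/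
/-!
For `t > 0`, `exp (arsinh t) = t + √(1 + t²)` gives `exp (arsinh t - log t) = 1 + √(1 + 1 / t²)`,
which is decreasing in `t`; this monotonicity is the bound in (ii) for positive arguments, and
oddness of `arsinh` handles negative ones. Shifting by `log 2`, `exp Δ(t) = (1 + √(1 + 4 / t²)) / 2`,
which lies in `[1, 1 + 1 / t²]` by `√(1 + x) ≤ 1 + x / 2`, and `Δ ≤ exp Δ - 1`.
For (iii), `(t * arsinh t)' = arsinh t + t / √(1 + t²)` and `t / √(1 + t²) = sin (arctan t)`
are increasing.
-/

open Real Set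

theorem exp_arsinh_sub_log {t : ℝ} (ht : 0 < t) :
    exp (arsinh t - log t) = 1 + √(1 + 1 / t ^ 2) := by
  rw [exp_sub, exp_log ht, exp_arsinh, add_div, div_self ht.ne']
  congr 1
  calc √(1 + t ^ 2) / t = √(1 + t ^ 2) / √(t ^ 2) := by rw [sqrt_sq ht.le]
    _ = √((1 + t ^ 2) / t ^ 2) := (sqrt_div' _ (sq_nonneg t)).symm
    _ = √(1 + 1 / t ^ 2) := by congr 1; field_simp; ring

theorem antitoneOn_arsinh_sub_log : AntitoneOn (fun t => arsinh t - log t) (Ioi 0) := by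
  intro s (hs : 0 < s) t (ht : 0 < t) hst
  rw [← exp_le_exp, exp_arsinh_sub_log ht, exp_arsinh_sub_log hs]
  gcongr

theorem abs_arsinh_sub_arsinh_le_abs_log_div {s t : ℝ} (hs : 0 < s) (ht : 0 < t) :
    |arsinh t - arsinh s| ≤ |log (t / s)| := by
  rw [log_div ht.ne' hs.ne']
  wlog hst : s ≤ t generalizing s t
  · rw [abs_sub_comm, abs_sub_comm (log t)]
    exact this ht hs (le_of_not_ge hst)
  rw [abs_of_nonneg (sub_nonneg.2 (arsinh_le_arsinh.2 hst)),
    abs_of_nonneg (sub_nonneg.2 (log_le_log hs hst))]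
  linarith [antitoneOn_arsinh_sub_log hs ht hst]

theorem abs_arsinh_sub_arsinh_le_abs_log_div_of_sign_eq {s t : ℝ} (hs : s ≠ 0) (ht : t ≠ 0)
    (hst : sign t = sign s) : |arsinh t - arsinh s| ≤ |log (t / s)| := by
  rcases hs.lt_or_gt with hs | hs
  · have ht : t < 0 := by
      refine ht.lt_or_gt.resolve_right fun ht => ?_
      rw [sign_of_pos ht, sign_of_neg hs] at hst
      norm_num at hst
    have := abs_arsinh_sub_arsinh_le_abs_log_div (neg_pos.2 hs) (neg_pos.2 ht)
    rwa [arsinh_neg, arsinh_neg, neg_sub_neg, abs_sub_comm, neg_div_neg_eq] at this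
  · have ht : 0 < t := by
      refine ht.lt_or_gt.resolve_left fun ht => ?_
      rw [sign_of_pos hs, sign_of_neg ht] at hst
      norm_num at hst
    exact abs_arsinh_sub_arsinh_le_abs_log_div hs ht

theorem exp_arsinh_half_sub_log {t : ℝ} (ht : 0 < t) :
    exp (arsinh (t / 2) - log t) = (1 + √(1 + 4 / t ^ 2)) / 2 := by
  have hsplit : arsinh (t / 2) - log t = (arsinh (t / 2) - log (t / 2)) - log 2 := by
    rw [log_div ht.ne' two_ne_zero]; ring
  rw [hsplit, exp_sub, exp_arsinh_sub_log (half_pos ht), exp_log two_pos]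
  congr 3
  field_simp
  ring

theorem arsinh_half_sub_log_nonneg {t : ℝ} (ht : 0 < t) : 0 ≤ arsinh (t / 2) - log t := by
  rw [← one_le_exp_iff, exp_arsinh_half_sub_log ht]
  linarith [one_le_sqrt.2 (le_add_of_nonneg_right (by positivity : 0 ≤ 4 / t ^ 2))]

theorem antitoneOn_arsinh_half_sub_log :
    AntitoneOn (fun t => arsinh (t / 2) - log t) (Ioi 0) := by
  intro s (hs : 0 < s) t (ht : 0 < t) hst
  have := antitoneOn_arsinh_sub_log (mem_Ioi.2 (half_pos hs)) (mem_Ioi.2 (half_pos ht))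
    (by linarith)
  simp only [log_div hs.ne' two_ne_zero, log_div ht.ne' two_ne_zero] at this ⊢
  linarith

theorem exp_arsinh_half_sub_log_le {t : ℝ} (ht : 0 < t) :
    exp (arsinh (t / 2) - log t) ≤ 1 + 1 / t ^ 2 := by
  have h4 : 0 ≤ 4 / t ^ 2 := by positivity
  rw [exp_arsinh_half_sub_log ht]
  linarith [sqrt_one_add_le (x := 4 / t ^ 2) (by linarith),
    show 4 / t ^ 2 / 2 = 2 * (1 / t ^ 2) by ring]

theorem arsinh_half_sub_log_le {t : ℝ} (ht : 0 < t) : arsinh (t / 2) - log t ≤ 1 / t ^ 2 := by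
  linarith [add_one_le_exp (arsinh (t / 2) - log t), exp_arsinh_half_sub_log_le ht]

theorem monotone_div_sqrt_one_add_sq : Monotone fun x : ℝ => x / √(1 + x ^ 2) := by
  simpa only [sin_arctan] using sin_arctan_strictMono.monotone

theorem hasDerivAt_mul_arsinh (x : ℝ) :
    HasDerivAt (fun t => t * arsinh t) (arsinh x + x / √(1 + x ^ 2)) x := by
  simpa [div_eq_mul_inv] using (hasDerivAt_id' x).fun_mul (hasDerivAt_arsinh x)

theorem convexOn_mul_arsinh : ConvexOn ℝ univ fun t : ℝ => t * arsinh t := by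
  refine Monotone.convexOn_univ_of_deriv (fun x => (hasDerivAt_mul_arsinh x).differentiableAt) ?_
  rw [funext fun x => (hasDerivAt_mul_arsinh x).deriv]
  exact arsinh_strictMono.monotone.add monotone_div_sqrt_one_add_sq

/-- basic properties of arsinh.  Here `Δ(t) = arsinh(t/2) − log t`. -/
theorem arsinh_basic_properties :
    (∀ t : ℝ, 0 < t → 0 ≤ Real.arsinh (t / 2) - Real.log t) ∧
    AntitoneOn (fun t : ℝ => Real.arsinh (t / 2) - Real.log t) (Set.Ioi 0) ∧
    (∀ t : ℝ, 0 < t → Real.arsinh (t / 2) - Real.log t ≤ 1 / t ^ 2) ∧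
    (∀ t : ℝ, 0 < t → Real.exp (Real.arsinh (t / 2) - Real.log t) ≤ 1 + 1 / t ^ 2) ∧
    (∀ s t : ℝ, s ≠ 0 → t ≠ 0 → Real.sign t = Real.sign s →
      |Real.arsinh t - Real.arsinh s| ≤ |Real.log (t / s)|) ∧
    ConvexOn ℝ Set.univ (fun t : ℝ => t * Real.arsinh t) :=
  ⟨fun _ => arsinh_half_sub_log_nonneg, antitoneOn_arsinh_half_sub_log,
    fun _ => arsinh_half_sub_log_le, fun _ => exp_arsinh_half_sub_log_le,
    fun _ _ => abs_arsinh_sub_arsinh_le_abs_log_div_of_sign_eq, convexOn_mul_arsinh⟩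
end
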